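/- A nonzero submodule N of an R-module M is weakly second if and only if N is strongly 2-absorbing second and Ann_R(N) is a prime ideal of R. -/

import Mathlib

open Pointwise

/-- A nonzero submodule `N` is weakly second if whenever `r s : R` and `K` is a
submodule with `r • s • N ⊆ K`, then `r • N ⊆ K` or `s • N ⊆ K`. -/
def IsWeaklySecond {R M : Type*} [CommRing R] [AddCommGroup M] [Module R M]
    (N : Submodule R M) : Prop :=
  N ≠ ⊥ ∧ ∀ (r s : R) (K : Submodule R M), r • s • N ≤ K → r • N ≤ K ∨ s • N ≤ K

/-- A nonzero submodule `N` is strongly 2-absorbing second: whenever `a b : R` and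
`K` is a submodule with `a • b • N ⊆ K`, then `a • N ⊆ K` or `b • N ⊆ K` or
`a • b • N = 0`. -/
def IsStrongly2AbsorbingSecond {R M : Type*} [CommRing R] [AddCommGroup M] [Module R M]
    (N : Submodule R M) : Prop :=
  N ≠ ⊥ ∧ ∀ (a b : R) (K : Submodule R M), a • b • N ≤ K →
    a • N ≤ K ∨ b • N ≤ K ∨ a • b • N = ⊥

section

variable {R M : Type*} [CommRing R] [AddCommGroup M] [Module R M] {N : Submodule R M}

theorem Submodule.pointwise_smul_eq_bot_iff_mem_annihilator {r : R} :
    r • N = ⊥ ↔ r ∈ N.annihilator := by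
  rw [← Submodule.ideal_span_singleton_smul, ← Submodule.le_annihilator_iff,
    Ideal.span_singleton_le_iff_mem]

theorem Submodule.pointwise_smul_le_of_mem_annihilator {r : R} (hr : r ∈ N.annihilator)
    (K : Submodule R M) : r • N ≤ K :=
  (pointwise_smul_eq_bot_iff_mem_annihilator.mpr hr).trans_le bot_le

theorem IsWeaklySecond.annihilator_isPrime (hN : IsWeaklySecond N) : N.annihilator.IsPrime := by
  refine ⟨fun htop ↦ hN.1 (Submodule.annihilator_eq_top_iff.mp htop), fun {a b} hab ↦ ?_⟩
  simp only [← Submodule.pointwise_smul_eq_bot_iff_mem_annihilator, ← le_bot_iff] at hab ⊢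
  exact hN.2 a b ⊥ (smul_smul a b N ▸ hab)

theorem IsWeaklySecond.isStrongly2AbsorbingSecond (hN : IsWeaklySecond N) :
    IsStrongly2AbsorbingSecond N :=
  ⟨hN.1, fun a b K hab ↦ (hN.2 a b K hab).imp_right Or.inl⟩

theorem IsStrongly2AbsorbingSecond.isWeaklySecond (hN : IsStrongly2AbsorbingSecond N)
    (hprime : N.annihilator.IsPrime) : IsWeaklySecond N := by
  refine ⟨hN.1, fun r s K hrs ↦ ?_⟩
  obtain h | h | hzero := hN.2 r s K hrs
  · exact Or.inl h
  · exact Or.inr h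
  · rw [smul_smul, Submodule.pointwise_smul_eq_bot_iff_mem_annihilator] at hzero
    exact (hprime.mem_or_mem hzero).imp
      (Submodule.pointwise_smul_le_of_mem_annihilator · K)
      (Submodule.pointwise_smul_le_of_mem_annihilator · K)

end

theorem weaklySecond_iff_general
    {R M : Type*} [CommRing R] [AddCommGroup M] [Module R M]
    (N : Submodule R M) :
    IsWeaklySecond N ↔ IsStrongly2AbsorbingSecond N ∧ N.annihilator.IsPrime :=
  ⟨fun hN ↦ ⟨hN.isStrongly2AbsorbingSecond, hN.annihilator_isPrime⟩,
    fun ⟨hN, hprime⟩ ↦ hN.isWeaklySecond hprime⟩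

theorem weaklySecond_iff
    {R M : Type*} [CommRing R] [AddCommGroup M] [Module R M]
    (N : Submodule R M) (hne : N ≠ ⊥) :
    IsWeaklySecond N ↔ IsStrongly2AbsorbingSecond N ∧ N.annihilator.IsPrime :=
  weaklySecond_iff_general N
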